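/- arXiv:2411.08797 — 6 statements merged into one kernel-verified Lean document; each statement's English description precedes it below -/
import Mathlib

section
/- Let X be a set and f : X → X an acyclic function (i.e., f^k(x) ≠ x for all x ∈ X and k ≥ 1), and let r be a positive integer. Let D_r be the directed graph on ℕ with an edge from k to ℓ iff (k > 0 and ℓ = k − 1) or (k = 0 and ℓ ≥ r). Then there exists an r-forward-independent hitting set for f if and only if there exists a map φ : X → ℕ such that for every x ∈ X there is an edge in D_r from φ(x) to φ(f(x)). -/
set_option linter.unusedVariables false

def Acyclic {X : Type*} (f : X → X) : Prop := ∀ x : X, ∀ k : ℕ, 1 ≤ k → f^[k] x ≠ x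

def Hitting {X : Type*} (f : X → X) (H : Set X) : Prop :=
  ∀ x : X, ∃ k : ℕ, 1 ≤ k ∧ f^[k] x ∈ H

def FwdIndep {X : Type*} (f : X → X) (r : ℕ) (H : Set X) : Prop :=
  ∀ x ∈ H, ∀ k : ℕ, 1 ≤ k → f^[k] x ∈ H → r < k

def funGraph {X : Type*} (f : X → X) : SimpleGraph X where
  Adj x y := x ≠ y ∧ (f x = y ∨ f y = x)
  symm := ⟨fun x y h => ⟨h.1.symm, h.2.symm⟩⟩
  loopless := ⟨fun x h => h.1 rfl⟩

/-- `x` and `y` are reachable from one another and at graph distance at most `r`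
in the graph generated by `f`. -/
def distLE {X : Type*} (f : X → X) (r : ℕ) (x y : X) : Prop :=
  (funGraph f).Reachable x y ∧ (funGraph f).dist x y ≤ r

/-- The generating relation of the equivalence relation `F_t(U)`. -/
def classRel {X : Type*} (f : X → X) (t : ℕ) (U : Set X) : X → X → Prop :=
  fun a b => a ∈ U ∧ b ∈ U ∧ distLE f t a b

/-- The ball of radius `t` around `x` in the graph generated by `f`. -/
def ball {X : Type*} (f : X → X) (t : ℕ) (x : X) : Set X := {y | distLE f t x y}

/-- A directed path of length `k` from `u` to `w` in the digraph `E`. -/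
def DiPath {V : Type*} (E : V → V → Prop) (k : ℕ) (u w : V) : Prop :=
  ∃ p : ℕ → V, p 0 = u ∧ p k = w ∧ ∀ i < k, E (p i) (p (i+1))

/-- The digraph `D_r` on ℕ. -/
def Drel (r : ℕ) (k l : ℕ) : Prop := (0 < k ∧ l = k - 1) ∨ (k = 0 ∧ r ≤ l)

/-- A directed path of length `k` from `u` to `w` staying inside `A`. -/
def PathIn {V : Type*} (E : V → V → Prop) (A : Set V) (k : ℕ) (u w : V) : Prop :=
  ∃ p : ℕ → V, p 0 = u ∧ p k = w ∧ (∀ i ≤ k, p i ∈ A) ∧ ∀ i < k, E (p i) (p (i+1))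

/-- `A` is a strong connectivity component of the digraph `E`. -/
def IsSCC {V : Type*} (E : V → V → Prop) (A : Set V) : Prop :=
  (∀ v ∈ A, ∀ w ∈ A, ∃ k, PathIn E A k v w) ∧
  ∀ B : Set V, A ⊆ B → (∀ v ∈ B, ∀ w ∈ B, ∃ k, PathIn E B k v w) → B = A

/-!
Given a hitting set `H`, label `x` by `hitTime x - 1`, where `hitTime x ≥ 1` is the first time the
orbit of `x` enters `H`: the label drops by one along `f` until the orbit reaches `H`, and forward
independence makes the next label at least `r`. Conversely, along a `D_r`-labelling the label
decreases by one per step while positive, so every orbit hits the zero set, and after leaving it an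
orbit needs more than `r` steps to return.
-/

section HitTime

variable {X : Type*} {f : X → X} {H : Set X}

open Classical in
noncomputable def hitTime (hH : Hitting f H) (x : X) : ℕ := Nat.find (hH x)

variable (hH : Hitting f H)

theorem one_le_hitTime (x : X) : 1 ≤ hitTime hH x := by
  classical exact (Nat.find_spec (hH x)).1

theorem iterate_hitTime_mem (x : X) : f^[hitTime hH x] x ∈ H := by
  classical exact (Nat.find_spec (hH x)).2

theorem hitTime_le {x : X} {k : ℕ} (hk : 1 ≤ k) (hkH : f^[k] x ∈ H) : hitTime hH x ≤ k := by
  classical exact Nat.find_le ⟨hk, hkH⟩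

theorem hitTime_apply_of_one_lt {x : X} (hx : 1 < hitTime hH x) :
    hitTime hH (f x) = hitTime hH x - 1 := by
  apply le_antisymm
  · apply hitTime_le hH (by omega)
    rw [← Function.iterate_succ_apply, Nat.succ_eq_add_one, Nat.sub_add_cancel hx.le]
    exact iterate_hitTime_mem hH x
  · have hmem : f^[hitTime hH (f x) + 1] x ∈ H := iterate_hitTime_mem hH (f x)
    have := hitTime_le hH (by omega) hmem
    omega

theorem lt_hitTime_apply_of_hitTime_eq_one {r : ℕ} (hInd : FwdIndep f r H) {x : X}
    (hx : hitTime hH x = 1) : r < hitTime hH (f x) := by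
  have hfx : f x ∈ H := by simpa [hx] using iterate_hitTime_mem hH x
  exact hInd (f x) hfx _ (one_le_hitTime hH (f x)) (iterate_hitTime_mem hH (f x))

theorem drel_hitTime_sub_one {r : ℕ} (hInd : FwdIndep f r H) (x : X) :
    Drel r (hitTime hH x - 1) (hitTime hH (f x) - 1) := by
  rcases (one_le_hitTime hH x).eq_or_lt with hx | hx
  · have := lt_hitTime_apply_of_hitTime_eq_one hH hInd hx.symm
    right
    omega
  · have := hitTime_apply_of_one_lt hH hx
    left
    omega

end HitTime

section Labelling

variable {X : Type*} {f : X → X} {r : ℕ} {φ : X → ℕ} (hφ : ∀ x, Drel r (φ x) (φ (f x)))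
include hφ

theorem apply_iterate_eq_sub {j : ℕ} {x : X} (hj : j ≤ φ x) : φ (f^[j] x) = φ x - j := by
  induction j with
  | zero => simp
  | succ n ih =>
    have hn : φ (f^[n] x) = φ x - n := ih (by omega)
    rw [Function.iterate_succ_apply']
    rcases hφ (f^[n] x) with ⟨_, h⟩ | ⟨h, _⟩ <;> omega

theorem hitting_zero_set : Hitting f {x | φ x = 0} := by
  intro x
  refine ⟨φ (f x) + 1, by omega, ?_⟩
  have := apply_iterate_eq_sub hφ (le_refl (φ (f x)))
  rw [← Function.iterate_succ_apply] at this
  simpa using this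

theorem fwdIndep_zero_set : FwdIndep f r {x | φ x = 0} := by
  intro x hx k hk hkx
  simp only [Set.mem_ofPred_eq] at hx hkx
  have hfx : r ≤ φ (f x) := by
    rcases hφ x with ⟨_, _⟩ | ⟨_, h⟩ <;> omega
  by_contra! hkr
  have := apply_iterate_eq_sub hφ (j := k - 1) (x := f x) (by omega)
  rw [← Function.iterate_succ_apply, Nat.succ_eq_add_one, Nat.sub_add_cancel hk] at this
  omega

end Labelling

theorem stmt0_general {X : Type*} (f : X → X) (r : ℕ) :
    (∃ H : Set X, FwdIndep f r H ∧ Hitting f H) ↔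
    (∃ φ : X → ℕ, ∀ x, Drel r (φ x) (φ (f x))) := by
  constructor
  · rintro ⟨H, hInd, hH⟩
    exact ⟨fun x => hitTime hH x - 1, drel_hitTime_sub_one hH hInd⟩
  · rintro ⟨φ, hφ⟩
    exact ⟨{x | φ x = 0}, fwdIndep_zero_set hφ, hitting_zero_set hφ⟩

theorem stmt0 {X : Type*} (f : X → X) (hf : Acyclic f) (r : ℕ) (hr : 1 ≤ r) :
    (∃ H : Set X, FwdIndep f r H ∧ Hitting f H) ↔
    (∃ φ : X → ℕ, ∀ x, Drel r (φ x) (φ (f x))) :=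
  stmt0_general f r
end

section
/- Let X be a set, f : X → X an acyclic function, r a positive integer, A ⊆ X a hitting set for f, and suppose every equivalence class of the equivalence relation F_r(A) on A (generated by pairs (x,y) ∈ A² whose graph distance in the graph generated by f is at most r) has finite diameter. Let H = A \ ⋃_{j=1}^r f^{-j}(A). Then H is an r-forward-independent hitting set for f. -/
set_option linter.unusedVariables false

/-!
Forward independence is immediate: a point of `H` has no iterate in `A` at times `1, …, r`.
For hitting, follow the orbit of `x` from a visit `y` to `A`. If it never reached `H`,
every visit to `A` would be followed by another one at most `r` steps later, so all later visits
lie in the `F_r(A)`-class of `y`. These visits go arbitrarily far out, while for an acyclic `f`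
the distance from `y` to `f^[n] y` in `G_f` is exactly `n`; so the class would have infinite
diameter.
-/

section Orbits

variable {X : Type*} {f : X → X}

theorem Acyclic.iterate_injective (hf : Acyclic f) (x : X) :
    Function.Injective fun n : ℕ => f^[n] x := by
  have key : ∀ a c : ℕ, f^[a] x ≠ f^[a + c + 1] x := fun a c h =>
    hf (f^[a] x) (c + 1) (by omega) (by rw [← Function.iterate_add_apply, h]; ring_nf)
  intro a b h
  obtain hab | rfl | hba := Nat.lt_trichotomy a b
  · obtain ⟨c, rfl⟩ := Nat.exists_eq_add_of_lt hab
    exact absurd h (key a c)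
  · rfl
  · obtain ⟨c, rfl⟩ := Nat.exists_eq_add_of_lt hba
    exact absurd h.symm (key b c)

theorem Acyclic.distLE_iterate (hf : Acyclic f) (x : X) (n : ℕ) : distLE f n x (f^[n] x) := by
  suffices ∃ w : (funGraph f).Walk x (f^[n] x), w.length = n by
    obtain ⟨w, hw⟩ := this
    exact ⟨⟨w⟩, (SimpleGraph.dist_le w).trans hw.le⟩
  induction n with
  | zero => exact ⟨.nil, rfl⟩
  | succ n ih =>
    obtain ⟨w, hw⟩ := ih
    have hstep : f (f^[n] x) = f^[n + 1] x := (Function.iterate_succ_apply' f n x).symm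
    have hne : f^[n] x ≠ f^[n + 1] x := fun h =>
      hf (f^[n] x) 1 le_rfl (by rw [Function.iterate_one, hstep, h])
    have hadj : (funGraph f).Adj (f^[n] x) (f^[n + 1] x) := ⟨hne, .inl hstep⟩
    exact ⟨w.concat hadj, by rw [SimpleGraph.Walk.length_concat, hw]⟩

theorem exists_iterate_eq_of_walk {u v : X} (w : (funGraph f).Walk u v) :
    ∃ s t, s + t = w.length ∧ f^[s] v = f^[t] u := by
  induction w with
  | nil => exact ⟨0, 0, rfl, rfl⟩
  | @cons u b v h w ih =>
    obtain ⟨s, t, hst, heq⟩ := ih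
    rw [SimpleGraph.Walk.length_cons]
    rcases h.2 with hub | hbu
    · exact ⟨s, t + 1, by omega, by rw [Function.iterate_succ_apply, hub, heq]⟩
    · refine ⟨s + 1, t, by omega, ?_⟩
      rw [Function.iterate_succ_apply', heq, ← hbu, ← Function.iterate_succ_apply,
        Function.iterate_succ_apply']

theorem Acyclic.le_of_distLE_iterate (hf : Acyclic f) {x : X} {m n : ℕ}
    (h : distLE f m x (f^[n] x)) : n ≤ m := by
  obtain ⟨w, hw⟩ := h.1.exists_walk_length_eq_dist
  obtain ⟨s, t, hst, heq⟩ := exists_iterate_eq_of_walk w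
  rw [← Function.iterate_add_apply] at heq
  have hlen : s + n = t := hf.iterate_injective x heq
  have hdist := h.2
  omega

variable (f) (r : ℕ) (A : Set X)

def noReturnWithin : Set X := A \ ⋃ j ∈ Finset.Icc 1 r, (fun y => f^[j] y) ⁻¹' A

theorem fwdIndep_noReturnWithin : FwdIndep f r (noReturnWithin f r A) := by
  intro x hx k hk hkx
  by_contra! hkr
  exact hx.2 (Set.mem_biUnion (Finset.mem_Icc.mpr ⟨hk, hkr⟩) hkx.1)

variable {f r A}

theorem Acyclic.exists_classRel_iterate (hf : Acyclic f) {y : X} (hyA : y ∈ A)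
    (hy : y ∉ noReturnWithin f r A) : ∃ j, 1 ≤ j ∧ classRel f r A y (f^[j] y) := by
  obtain ⟨j, hj1, hjr, hjA⟩ : ∃ j, 1 ≤ j ∧ j ≤ r ∧ f^[j] y ∈ A := by
    simpa [noReturnWithin, hyA] using hy
  obtain ⟨hreach, hdist⟩ := hf.distLE_iterate y j
  exact ⟨j, hj1, hyA, hjA, hreach, hdist.trans hjr⟩

theorem Acyclic.exists_iterate_eqvGen_of_forall_notMem (hf : Acyclic f) {y : X} (hyA : y ∈ A)
    (hy : ∀ k, f^[k] y ∉ noReturnWithin f r A) (n : ℕ) :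
    ∃ k, n ≤ k ∧ f^[k] y ∈ A ∧ Relation.EqvGen (classRel f r A) y (f^[k] y) := by
  induction n with
  | zero => exact ⟨0, le_rfl, hyA, .refl y⟩
  | succ n ih =>
    obtain ⟨k, hnk, hkA, hyk⟩ := ih
    obtain ⟨j, hj, hrel⟩ := hf.exists_classRel_iterate hkA (hy k)
    rw [← Function.iterate_add_apply] at hrel
    exact ⟨j + k, by omega, hrel.2.1, hyk.trans _ _ _ (.rel _ _ hrel)⟩

end Orbits

theorem stmt1_general {X : Type*} (f : X → X) (hf : Acyclic f) (r : ℕ)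
    (A : Set X) (hA : Hitting f A)
    (hdiam : ∀ x ∈ A, ∃ m : ℕ, ∀ y z, Relation.EqvGen (classRel f r A) x y →
      Relation.EqvGen (classRel f r A) x z → distLE f m y z)
    (H : Set X) (hH : H = A \ ⋃ j ∈ Finset.Icc 1 r, (fun y => f^[j] y) ⁻¹' A) :
    FwdIndep f r H ∧ Hitting f H := by
  change H = noReturnWithin f r A at hH
  subst hH
  refine ⟨fwdIndep_noReturnWithin f r A, fun x => ?_⟩
  obtain ⟨k₀, hk₀, hyA⟩ := hA x
  suffices ∃ k, f^[k] (f^[k₀] x) ∈ noReturnWithin f r A by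
    obtain ⟨k, hk⟩ := this
    exact ⟨k + k₀, by omega, by rwa [Function.iterate_add_apply]⟩
  by_contra! hnone
  obtain ⟨m, hm⟩ := hdiam _ hyA
  obtain ⟨k, hmk, -, hyk⟩ := hf.exists_iterate_eqvGen_of_forall_notMem hyA hnone (m + 1)
  have := hf.le_of_distLE_iterate (hm _ _ (.refl _) hyk)
  omega

theorem stmt1 {X : Type*} (f : X → X) (hf : Acyclic f) (r : ℕ) (hr : 1 ≤ r)
    (A : Set X) (hA : Hitting f A)
    (hdiam : ∀ x ∈ A, ∃ m : ℕ, ∀ y z, Relation.EqvGen (classRel f r A) x y →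
      Relation.EqvGen (classRel f r A) x z → distLE f m y z)
    (H : Set X) (hH : H = A \ ⋃ j ∈ Finset.Icc 1 r, (fun y => f^[j] y) ⁻¹' A) :
    FwdIndep f r H ∧ Hitting f H :=
  stmt1_general f hf r A hA hdiam H hH
end

section
/- Let x, y : ℕ → ℕ be strictly increasing sequences, let r be a positive integer, and set x(−r) = 0 by convention. Suppose that y ≤^∞ x, i.e., the set {n ∈ ℕ : y(n) ≤ x(n)} is infinite. Then there exists n ∈ ℕ such that the interval [x(2rn − r), x(2rn + r)) contains at least 2r elements of the range of y. -/
set_option linter.unusedVariables false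

/-! If every interval `[x(2rn - r), x(2rn + r))` held fewer than `2r` values of `y`, the `N + 1`
intervals tiling `[0, x(2rN + r))` would hold at most `(N + 1)(2r - 1)` of them. But if `y m ≤ x m`
with `m < 2rN + r`, then `y 0, …, y m` all lie below `x(2rN + r)`, and for `m` large and
`N ≈ m / 2r` the count `m + 1` beats `(N + 1)(2r - 1)`. -/

open Set

theorem ncard_inter_Ico_le_mul {α : Type*} [LinearOrder α] (S : Set α) {b : ℕ → α}
    (hb : Monotone b) {c N : ℕ} (h : ∀ n < N, (S ∩ Ico (b n) (b (n + 1))).ncard ≤ c) :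
    (S ∩ Ico (b 0) (b N)).ncard ≤ N * c := by
  induction N with
  | zero => simp
  | succ N ih =>
    have hsplit : Ico (b 0) (b (N + 1)) = Ico (b 0) (b N) ∪ Ico (b N) (b (N + 1)) :=
      (Ico_union_Ico_eq_Ico (hb N.zero_le) (hb N.le_succ)).symm
    calc (S ∩ Ico (b 0) (b (N + 1))).ncard
        ≤ (S ∩ Ico (b 0) (b N)).ncard + (S ∩ Ico (b N) (b (N + 1))).ncard := by
          rw [hsplit, inter_union_distrib_left]
          exact ncard_union_le _ _
      _ ≤ N * c + c :=
          add_le_add (ih fun n hn => h n (hn.trans N.lt_succ_self)) (h N N.lt_succ_self)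
      _ = (N + 1) * c := (Nat.succ_mul N c).symm

theorem StrictMono.succ_le_ncard_range_inter_Iio {y : ℕ → ℕ} (hy : StrictMono y) {m B : ℕ}
    (hm : y m < B) : m + 1 ≤ (range y ∩ Iio B).ncard := by
  have hsub : y '' Iic m ⊆ range y ∩ Iio B := by
    rintro _ ⟨i, hi, rfl⟩
    exact ⟨mem_range_self i, (hy.monotone hi).trans_lt hm⟩
  calc m + 1 = (y '' Iic m).ncard := by
        rw [ncard_image_of_injective _ hy.injective, ← Finset.coe_Iic, ncard_coe_finset,
          Nat.card_Iic]
    _ ≤ (range y ∩ Iio B).ncard := ncard_le_ncard hsub ((finite_Iio B).inter_of_right _)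

theorem exists_lt_two_mul_mul_add_and_succ_mul_le {r m : ℕ} (hr : 1 ≤ r) (hm : 6 * r ^ 2 ≤ m) :
    ∃ N, m < 2 * r * N + r ∧ (N + 1) * (2 * r - 1) ≤ m := by
  refine ⟨(m + r) / (2 * r), ?_, ?_⟩
  · have := Nat.lt_mul_div_succ (m + r) (show 0 < 2 * r by omega)
    linarith
  · have hle := Nat.mul_div_le (m + r) (2 * r)
    have hN : 3 * r ≤ (m + r) / (2 * r) := by
      rw [Nat.le_div_iff_mul_le (by omega)]
      nlinarith
    obtain ⟨s, rfl⟩ : ∃ s, r = s + 1 := ⟨r - 1, by omega⟩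
    have : 2 * (s + 1) - 1 = 2 * s + 1 := by omega
    rw [this]
    nlinarith

theorem stmt8 (x y : ℕ → ℕ) (hx : StrictMono x) (hy : StrictMono y)
    (r : ℕ) (hr : 1 ≤ r) (hdom : {n : ℕ | y n ≤ x n}.Infinite) :
    ∃ n : ℕ, 2*r ≤
      (Set.range y ∩ Set.Ico (if n = 0 then 0 else x (2*r*n - r)) (x (2*r*n + r))).ncard := by
  by_contra! hsparse
  set b : ℕ → ℕ := fun n => if n = 0 then 0 else x (2 * r * n - r)
  have hb_succ (n : ℕ) : b (n + 1) = x (2 * r * n + r) := by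
    simp only [b, if_neg n.succ_ne_zero]
    congr 1
    rw [Nat.mul_succ]
    omega
  have hb : Monotone b := monotone_nat_of_le_succ fun n => by
    rw [hb_succ]
    rcases n with _ | n
    · exact Nat.zero_le _
    · rw [hb_succ]
      exact hx.monotone (by nlinarith)
  obtain ⟨m, hm, hm_large⟩ := hdom.exists_gt (6 * r ^ 2)
  obtain ⟨N, hmN, hNm⟩ := exists_lt_two_mul_mul_add_and_succ_mul_le hr hm_large.le
  have hupper := ncard_inter_Ico_le_mul (range y) hb (c := 2 * r - 1) (N := N + 1)
    fun n _ => by rw [hb_succ]; exact Nat.le_sub_one_of_lt (hsparse n)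
  have hlower := hy.succ_le_ncard_range_inter_Iio (hm.trans_lt (hx hmN))
  have hIco : Ico (b 0) (x (2 * r * N + r)) = Iio (x (2 * r * N + r)) := by
    ext; simp [b]
  rw [hb_succ, hIco] at hupper
  omega
end

section
/- There is no Borel map φ : [ℕ]^ℕ → ℕ that is a homomorphism from the shift digraph to D_r, for any positive integer r. Equivalently, there is no Borel r-forward-independent hitting set for the shift map S on [ℕ]^ℕ. -/
set_option linter.unusedVariables false

/-!
Galvin–Prikry: every Borel set of infinite subsets of `ℕ` is completely Ramsey, i.e. for every
`[s, A]` there is an infinite `B ⊆ A` such that `[s, B]` lies inside the set or outside it. The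
completely Ramsey sets form a σ-algebra containing the open sets; both facts are proved with the
accept/reject combinatorics of Galvin and Prikry and a fusion (diagonal) construction.

If `φ` were a Borel homomorphism to `D_r`, its zero set `H` would meet every forward orbit of the
shift, and `x ∈ H` would force `S x ∉ H` because `r ≥ 1`. Identify an infinite set with its
increasing enumeration and take `B` homogeneous for `H`: if all infinite subsets of `B` lie in `H`,
then so do `B` and its tail `S B`; if none does, the forward orbit of `B`, made of tails of `B`,
misses `H`.
-/

open Set MeasureTheory

namespace GalvinPrikry

def above (t : Finset ℕ) : Set ℕ := {b | ∀ c ∈ t, c < b}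

/-- The Ellentuck neighbourhood `[s, B]`. -/
def ellentuck (s : Finset ℕ) (B : Set ℕ) : Set (Set ℕ) :=
  {x | ∃ z ⊆ B ∩ above s, z.Infinite ∧ x = ↑s ∪ z}

def Accepts (X : Set (Set ℕ)) (B : Set ℕ) (s : Finset ℕ) : Prop := ellentuck s B ⊆ X

def Homogeneous (X : Set (Set ℕ)) (B : Set ℕ) (s : Finset ℕ) : Prop :=
  Accepts X B s ∨ Accepts Xᶜ B s

def CompletelyRamsey (X : Set (Set ℕ)) : Prop :=
  ∀ (s : Finset ℕ) (A : Set ℕ), A.Infinite → ∃ B ⊆ A, B.Infinite ∧ Homogeneous X B s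

/-- Openness in the product topology of `Set ℕ`, tested on infinite sets only. -/
def IsOpenOnInfinite (X : Set (Set ℕ)) : Prop :=
  ∀ x ∈ X, x.Infinite → ∃ n, ∀ y : Set ℕ, y.Infinite → y ∩ Iio n = x ∩ Iio n → y ∈ X

noncomputable def initSeg (x : Set ℕ) (n : ℕ) : Finset ℕ :=
  ((finite_Iio n).inter_of_right x).toFinset

@[simp]
theorem coe_initSeg (x : Set ℕ) (n : ℕ) : (initSeg x n : Set ℕ) = x ∩ Iio n :=
  Finite.coe_toFinset _

@[simp]
theorem mem_initSeg {x : Set ℕ} {n a : ℕ} : a ∈ initSeg x n ↔ a ∈ x ∧ a < n :=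
  Finite.mem_toFinset _

theorem above_mono {s t : Finset ℕ} (h : s ⊆ t) : above t ⊆ above s :=
  fun _ hb c hc => hb c (h hc)

theorem infinite_inter_Ioi {A : Set ℕ} (hA : A.Infinite) (n : ℕ) : (A ∩ Ioi n).Infinite := by
  refine (hA.sdiff (finite_Iic n)).mono ?_
  rintro b ⟨hbA, hb⟩
  exact ⟨hbA, mem_Ioi.2 (lt_of_not_ge hb)⟩

theorem infinite_inter_above {A : Set ℕ} (hA : A.Infinite) (t : Finset ℕ) :
    (A ∩ above t).Infinite := by
  refine (infinite_inter_Ioi hA (t.sup id)).mono ?_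
  rintro b ⟨hbA, hb⟩
  exact ⟨hbA, fun c hc => (Finset.le_sup (f := id) hc).trans_lt hb⟩

theorem ellentuck_subset_ellentuck {s : Finset ℕ} {B C : Set ℕ} (h : B ∩ above s ⊆ C) :
    ellentuck s B ⊆ ellentuck s C := by
  rintro _ ⟨z, hz, hzi, rfl⟩
  exact ⟨z, subset_inter (hz.trans h) (hz.trans inter_subset_right), hzi, rfl⟩

theorem mem_ellentuck_empty {B x : Set ℕ} : x ∈ ellentuck ∅ B ↔ x ⊆ B ∧ x.Infinite := by
  simp [ellentuck, above]

theorem union_mem_ellentuck {s t : Finset ℕ} {z B : Set ℕ} {n : ℕ} (hzB : z ⊆ B)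
    (hz : z.Infinite) (hs : ↑s ⊆ Iio n) (ht : (↑s ∪ z) ∩ Iio n = t) :
    ↑s ∪ z ∈ ellentuck t B := by
  refine ⟨(↑s ∪ z) \ Iio n, subset_inter ?_ fun b hb c hc => ?_, ?_, ?_⟩
  · rintro e ⟨he | he, hen⟩
    exacts [absurd (hs he) hen, hzB he]
  · have hc' : c ∈ (↑s ∪ z) ∩ Iio n := ht ▸ hc
    exact lt_of_lt_of_le hc'.2 (not_lt.1 hb.2)
  · exact (hz.mono subset_union_right).sdiff (finite_Iio n)
  · rw [← ht, inter_union_sdiff]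

theorem exists_forall_mem_of_forall {α : Type*} (P : α → Set ℕ → Prop)
    (hmono : ∀ i B C, C ⊆ B → P i B → P i C)
    (hstep : ∀ i A, A.Infinite → ∃ B ⊆ A, B.Infinite ∧ P i B) (T : Finset α) {A : Set ℕ}
    (hA : A.Infinite) : ∃ B ⊆ A, B.Infinite ∧ ∀ i ∈ T, P i B := by
  classical
  induction T using Finset.induction_on generalizing A with
  | empty => exact ⟨A, subset_rfl, hA, by simp⟩
  | insert i T _ ih =>
    obtain ⟨B, hBA, hB, hPB⟩ := ih hA
    obtain ⟨C, hCB, hC, hPC⟩ := hstep i B hB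
    refine ⟨C, hCB.trans hBA, hC, ?_⟩
    simp only [Finset.mem_insert, forall_eq_or_imp]
    exact ⟨hPC, fun j hj => hmono j B C hCB (hPB j hj)⟩

theorem exists_fusion (P : Finset ℕ → Set ℕ → Prop) (hmono : ∀ t B C, C ⊆ B → P t B → P t C)
    (hstep : ∀ t A, A.Infinite → ∃ B ⊆ A, B.Infinite ∧ P t B) {A : Set ℕ} (hA : A.Infinite) :
    ∃ B ⊆ A, B.Infinite ∧ ∀ t : Finset ℕ, ↑t ⊆ B → P t (B ∩ above t) := by
  have hstep' (n : ℕ) (A : Set ℕ) (hA : A.Infinite) :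
      ∃ B ⊆ A, B.Infinite ∧ ∀ t ∈ (Finset.range n).powerset, P t B :=
    exists_forall_mem_of_forall P hmono hstep _ hA
  choose! g hgA hg hgP using hstep'
  -- Stage `k + 1` lies above `a k = sInf (D k)` and takes care of every `t ⊆ {0, …, a k}`.
  let D : ℕ → Set ℕ := fun k => (fun E => g (sInf E + 1) (E ∩ Ioi (sInf E)))^[k] (g 0 A)
  let a : ℕ → ℕ := fun k => sInf (D k)
  have hD_succ (k : ℕ) : D (k + 1) = g (a k + 1) (D k ∩ Ioi (a k)) :=
    Function.iterate_succ_apply' ..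
  have hD (k : ℕ) : (D k).Infinite := by
    induction k with
    | zero => exact hg 0 A hA
    | succ k ih => rw [hD_succ]; exact hg _ _ (infinite_inter_Ioi ih _)
  have hD_sub (k : ℕ) : D (k + 1) ⊆ D k ∩ Ioi (a k) := by
    rw [hD_succ]
    exact hgA _ _ (infinite_inter_Ioi (hD k) _)
  have ha_mem (k : ℕ) : a k ∈ D k := Nat.sInf_mem (hD k).nonempty
  have hD_anti : Antitone D :=
    antitone_nat_of_succ_le fun k => (hD_sub k).trans inter_subset_left
  have ha : StrictMono a := strictMono_nat_of_lt_succ fun k => (hD_sub k (ha_mem (k + 1))).2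
  refine ⟨range a, ?_, infinite_range_of_injective ha.injective, fun t ht => ?_⟩
  · rintro _ ⟨k, rfl⟩
    exact hgA 0 A hA (hD_anti k.zero_le (ha_mem k))
  rcases t.eq_empty_or_nonempty with rfl | hne
  · refine hmono ∅ (D 0) _ (fun _ ⟨⟨k, hk⟩, _⟩ => hk ▸ hD_anti k.zero_le (ha_mem k)) ?_
    exact hgP 0 A hA ∅ (by simp)
  obtain ⟨j, hj⟩ := ht (t.max'_mem hne)
  refine hmono t (D (j + 1)) _ ?_ ?_
  · rintro _ ⟨⟨i, rfl⟩, hi⟩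
    have hji : a j < a i := hj ▸ hi _ (t.max'_mem hne)
    exact hD_anti (ha.lt_iff_lt.1 hji) (ha_mem i)
  · rw [hD_succ]
    refine hgP _ _ (infinite_inter_Ioi (hD j) _) t (Finset.mem_powerset.2 fun c hc => ?_)
    exact Finset.mem_range.2 (Nat.lt_succ_of_le (hj ▸ t.le_max' c hc))

section AcceptReject

variable (X : Set (Set ℕ))

def Rejects (B : Set ℕ) (s : Finset ℕ) : Prop := ∀ C ⊆ B, C.Infinite → ¬Accepts X C s

def Decides (B : Set ℕ) (s : Finset ℕ) : Prop := Accepts X B s ∨ Rejects X B s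

variable {X} {s : Finset ℕ} {B C : Set ℕ}

theorem Accepts.of_inter_above_subset (h : B ∩ above s ⊆ C) (hC : Accepts X C s) :
    Accepts X B s :=
  (ellentuck_subset_ellentuck h).trans hC

theorem Accepts.mono (h : C ⊆ B) (hB : Accepts X B s) : Accepts X C s :=
  hB.of_inter_above_subset (inter_subset_left.trans h)

theorem Rejects.mono (h : C ⊆ B) (hB : Rejects X B s) : Rejects X C s :=
  fun D hD => hB D (hD.trans h)

theorem Decides.mono (h : C ⊆ B) (hB : Decides X B s) : Decides X C s :=
  hB.imp (Accepts.mono h) (Rejects.mono h)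

theorem Homogeneous.mono (h : C ⊆ B) (hB : Homogeneous X B s) : Homogeneous X C s :=
  hB.imp (Accepts.mono h) (Accepts.mono h)

theorem Homogeneous.of_inter_above_subset (h : B ∩ above s ⊆ C) (hC : Homogeneous X C s) :
    Homogeneous X B s :=
  hC.imp (Accepts.of_inter_above_subset h) (Accepts.of_inter_above_subset h)

theorem Decides.of_inter_above_subset (h : B ∩ above s ⊆ C) (hC : Decides X C s) :
    Decides X B s := by
  refine hC.imp (Accepts.of_inter_above_subset h) fun hrej D hDB hD hacc => ?_
  exact hrej (D ∩ above s) ((inter_subset_inter_left _ hDB).trans h)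
    (infinite_inter_above hD s) (hacc.mono inter_subset_left)

variable (X) in
theorem exists_decides (s : Finset ℕ) {A : Set ℕ} (hA : A.Infinite) :
    ∃ B ⊆ A, B.Infinite ∧ Decides X B s := by
  by_cases h : ∃ B ⊆ A, B.Infinite ∧ Accepts X B s
  · obtain ⟨B, hBA, hB, hacc⟩ := h
    exact ⟨B, hBA, hB, Or.inl hacc⟩
  · exact ⟨A, subset_rfl, hA, Or.inr fun C hCA hC hacc => h ⟨C, hCA, hC, hacc⟩⟩

theorem Rejects.finite_setOf_accepts_insert (h : Rejects X B s) :
    {b ∈ B | Accepts X B (insert b s)}.Finite := by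
  classical
  by_contra hinf
  refine h _ (sep_subset _ _) hinf ?_
  rintro _ ⟨z, hz, hzi, rfl⟩
  set b := sInf z
  have hbz : b ∈ z := Nat.sInf_mem hzi.nonempty
  refine (hz hbz).1.2 ⟨z \ {b}, fun e he => ⟨(hz he.1).1.1, ?_⟩, hzi.sdiff (finite_singleton b), ?_⟩
  · intro c hc
    rcases Finset.mem_insert.1 hc with rfl | hc
    · exact lt_of_le_of_ne (Nat.sInf_le he.1) (Ne.symm he.2)
    · exact (hz he.1).2 c hc
  · rw [Finset.coe_insert, insert_union, ← union_insert, insert_sdiff_singleton,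
      insert_eq_of_mem hbz]

end AcceptReject

section Open

variable {X : Set (Set ℕ)}

theorem exists_forall_rejects {s : Finset ℕ} {B : Set ℕ} (hB : B.Infinite)
    (hdec : ∀ t : Finset ℕ, ↑t ⊆ B → Decides X B (s ∪ t)) (hs : Rejects X B s) :
    ∃ C ⊆ B, C.Infinite ∧ ∀ t : Finset ℕ, ↑t ⊆ C → Rejects X C (s ∪ t) := by
  classical
  -- After a rejected `u` only finitely many `b` make `insert b u` accepted; the fusion discards
  -- them, so rejection propagates from `s` to every `s ∪ t`.
  obtain ⟨C, hCB, hC, hfus⟩ := exists_fusion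
    (fun t D => Rejects X B (s ∪ t) → ∀ b ∈ D ∩ B, ¬Accepts X B (insert b (s ∪ t)))
    (fun t D E hED h hrej b hb => h hrej b ⟨hED hb.1, hb.2⟩)
    (fun t A hA => by
      by_cases hrej : Rejects X B (s ∪ t)
      · exact ⟨A \ _, sdiff_subset, hA.sdiff hrej.finite_setOf_accepts_insert,
          fun _ b hb hacc => hb.1.2 ⟨hb.2, hacc⟩⟩
      · exact ⟨A, subset_rfl, hA, fun h => absurd h hrej⟩) hB
  refine ⟨C, hCB, hC, fun t ht => Rejects.mono hCB ?_⟩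
  induction t using Finset.induction_on_max with
  | empty => simpa using hs
  | insert a t hat ih =>
    rw [Finset.coe_insert, insert_subset_iff] at ht
    have hacc := hfus t ht.2 (ih ht.2) a ⟨⟨ht.1, hat⟩, hCB ht.1⟩
    rw [Finset.union_insert]
    have hdec' := hdec (insert a t) (by simpa using insert_subset (hCB ht.1) (ht.2.trans hCB))
    rw [Finset.union_insert] at hdec'
    exact hdec'.resolve_left hacc

theorem accepts_compl_of_forall_rejects (hX : IsOpenOnInfinite X) {s : Finset ℕ} {B : Set ℕ}
    (h : ∀ t : Finset ℕ, ↑t ⊆ B → Rejects X B (s ∪ t)) : Accepts Xᶜ B s := by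
  rintro _ ⟨z, hz, hzi, rfl⟩ hxX
  obtain ⟨n, hn⟩ := hX _ hxX (hzi.mono subset_union_right)
  have hzB : z ⊆ B := hz.trans inter_subset_left
  -- Membership in `X` is decided below `n`, so `B ∩ Ioi n` accepts `s ∪ (z ∩ Iio n)`.
  refine h (initSeg z n) (by simpa using inter_subset_left.trans hzB) (B ∩ Ioi n)
    inter_subset_left (infinite_inter_Ioi (hzi.mono hzB) n) ?_
  rintro _ ⟨w, hw, hwi, rfl⟩
  refine hn _ (hwi.mono subset_union_right) ?_
  have hwn : ∀ e ∈ w, n < e := fun e he => (hw he).1.2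
  ext e
  simp only [Finset.coe_union, coe_initSeg, mem_inter_iff, mem_union, mem_Iio]
  constructor
  · rintro ⟨(he | he) | he, hen⟩
    exacts [⟨Or.inl he, hen⟩, ⟨Or.inr he.1, hen⟩, absurd (hwn e he) (not_lt.2 hen.le)]
  · rintro ⟨he | he, hen⟩
    exacts [⟨Or.inl (Or.inl he), hen⟩, ⟨Or.inl (Or.inr ⟨he, hen⟩), hen⟩]

theorem IsOpenOnInfinite.completelyRamsey (hX : IsOpenOnInfinite X) : CompletelyRamsey X := by
  intro s A hA
  obtain ⟨B, hBA, hB, hdec⟩ := exists_fusion (fun t B => Decides X B (s ∪ t))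
    (fun t B C h => Decides.mono h) (fun t A hA => exists_decides X _ hA) hA
  replace hdec (t : Finset ℕ) (ht : ↑t ⊆ B) : Decides X B (s ∪ t) :=
    (hdec t ht).of_inter_above_subset
      (inter_subset_inter_right _ (above_mono Finset.subset_union_right))
  rcases (by simpa using hdec ∅ (by simp) : Decides X B s) with hacc | hrej
  · exact ⟨B, hBA, hB, Or.inl hacc⟩
  obtain ⟨C, hCB, hC, hrej⟩ := exists_forall_rejects hB hdec hrej
  exact ⟨C, hCB.trans hBA, hC, Or.inr (accepts_compl_of_forall_rejects hX hrej)⟩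

end Open

theorem completelyRamsey_empty : CompletelyRamsey ∅ :=
  fun _ A hA => ⟨A, subset_rfl, hA, Or.inr fun x _ => notMem_empty x⟩

theorem CompletelyRamsey.compl {X : Set (Set ℕ)} (h : CompletelyRamsey X) :
    CompletelyRamsey Xᶜ := by
  intro s A hA
  obtain ⟨B, hBA, hB, hhom⟩ := h s A hA
  exact ⟨B, hBA, hB, by rwa [Homogeneous, compl_compl, or_comm]⟩

theorem exists_forall_homogeneous {X : ℕ → Set (Set ℕ)} (hX : ∀ m, CompletelyRamsey (X m))
    (s : Finset ℕ) {A : Set ℕ} (hA : A.Infinite) :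
    ∃ B ⊆ A, B.Infinite ∧
      ∀ t : Finset ℕ, ↑t ⊆ B → ∀ m ≤ t.sup id, Homogeneous (X m) B (s ∪ t) := by
  obtain ⟨B, hBA, hB, hhom⟩ := exists_fusion
    (fun t B => ∀ m ≤ t.sup id, Homogeneous (X m) B (s ∪ t))
    (fun t B C hCB h m hm => (h m hm).mono hCB)
    (fun t A hA => by
      obtain ⟨B, hBA, hB, h⟩ := exists_forall_mem_of_forall (fun m B => Homogeneous (X m) B (s ∪ t))
        (fun m B C hCB h => h.mono hCB) (fun m A hA => hX m (s ∪ t) A hA)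
        (Finset.range (t.sup id + 1)) hA
      exact ⟨B, hBA, hB, fun m hm => h m (Finset.mem_range.2 (Nat.lt_succ_of_le hm))⟩) hA
  refine ⟨B, hBA, hB, fun t ht m hm => (hhom t ht m hm).of_inter_above_subset ?_⟩
  exact inter_subset_inter_right _ (above_mono Finset.subset_union_right)

theorem CompletelyRamsey.iUnion {X : ℕ → Set (Set ℕ)} (hX : ∀ m, CompletelyRamsey (X m)) :
    CompletelyRamsey (⋃ m, X m) := by
  intro s A hA
  obtain ⟨B, hBA, hB, hhom⟩ := exists_forall_homogeneous hX s hA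
  -- The sets that enter some `X m` together with a whole neighbourhood `[t, B]`.
  let O : Set (Set ℕ) :=
    {x | ∃ (n m : ℕ) (t : Finset ℕ), s ⊆ t ∧ x ∩ Iio n = t ∧ Accepts (X m) B t}
  have hO : IsOpenOnInfinite O := by
    rintro x ⟨n, m, t, hst, hxt, hacc⟩ -
    exact ⟨n, fun y _ hyx => ⟨n, m, t, hst, hyx.trans hxt, hacc⟩⟩
  obtain ⟨C, hCB, hC, hOC⟩ := hO.completelyRamsey s B hB
  refine ⟨C, hCB.trans hBA, hC, hOC.imp (fun hacc x hx => ?_) (fun hrej x hx hxX => ?_)⟩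
  · obtain ⟨n, m, t, hst, hxt, hm⟩ := hacc hx
    obtain ⟨z, hz, hzi, rfl⟩ := hx
    have hsn : ↑s ⊆ Iio n := (Finset.coe_subset.2 hst).trans (hxt ▸ inter_subset_right)
    exact mem_iUnion.2 ⟨m, hm (union_mem_ellentuck (hz.trans (inter_subset_left.trans hCB))
      hzi hsn hxt)⟩
  · obtain ⟨m, hxm⟩ := mem_iUnion.1 hxX
    obtain ⟨z, hz, hzi, rfl⟩ := id hx
    obtain ⟨d, hdz, hmd⟩ := hzi.exists_gt m
    have hzB : z ⊆ B := hz.trans (inter_subset_left.trans hCB)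
    have hsd : ↑s ⊆ Iio (d + 1) := fun c hc => Nat.lt_succ_of_lt ((hz hdz).2 c hc)
    have hcut : (↑s ∪ z) ∩ Iio (d + 1) = ↑(s ∪ initSeg z (d + 1)) := by
      rw [Finset.coe_union, coe_initSeg, union_inter_distrib_right, inter_eq_left.2 hsd]
    have hu : ↑(initSeg z (d + 1)) ⊆ B := by simpa using inter_subset_left.trans hzB
    have hmu : m ≤ (initSeg z (d + 1)).sup id :=
      hmd.le.trans (Finset.le_sup (f := id) (mem_initSeg.2 ⟨hdz, d.lt_succ_self⟩))
    have hacc : Accepts (X m) B (s ∪ initSeg z (d + 1)) :=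
      (hhom _ hu m hmu).resolve_right fun h => h (union_mem_ellentuck hzB hzi hsd hcut) hxm
    exact hrej hx ⟨d + 1, m, _, Finset.subset_union_left, hcut, hacc⟩

abbrev completelyRamseyMeasurableSpace : MeasurableSpace (Set ℕ) where
  MeasurableSet' := CompletelyRamsey
  measurableSet_empty := completelyRamsey_empty
  measurableSet_compl _ := CompletelyRamsey.compl
  measurableSet_iUnion _ := CompletelyRamsey.iUnion

theorem isOpenOnInfinite_nth_eq (k m : ℕ) : IsOpenOnInfinite {x | Nat.nth (· ∈ x) k = m} := by
  classical
  rintro x rfl hx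
  refine ⟨Nat.nth (· ∈ x) k + 1, fun y _ hyx => ?_⟩
  have hmem (i : ℕ) (hi : i ≤ Nat.nth (· ∈ x) k) : i ∈ y ↔ i ∈ x := by
    simpa [Nat.lt_succ_of_le hi] using Set.ext_iff.1 hyx i
  have hcount : Nat.count (· ∈ y) (Nat.nth (· ∈ x) k) = k :=
    calc Nat.count (· ∈ y) (Nat.nth (· ∈ x) k) = Nat.count (· ∈ x) (Nat.nth (· ∈ x) k) :=
          le_antisymm (Nat.count_mono_left fun i hi => (hmem i hi.le).1)
            (Nat.count_mono_left fun i hi => (hmem i hi.le).2)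
      _ = k := Nat.count_nth_of_infinite (p := (· ∈ x)) hx k
  show Nat.nth (· ∈ y) k = _
  conv_lhs => rw [← hcount]
  exact Nat.nth_count ((hmem _ le_rfl).2 (Nat.nth_mem_of_infinite hx k))

theorem measurable_nth :
    Measurable[completelyRamseyMeasurableSpace] fun (x : Set ℕ) (k : ℕ) => Nat.nth (· ∈ x) k := by
  let := completelyRamseyMeasurableSpace
  refine measurable_pi_iff.2 fun k => measurable_to_countable' fun m => ?_
  exact (isOpenOnInfinite_nth_eq k m).completelyRamsey

theorem completelyRamsey_nth_preimage {M : Set (ℕ → ℕ)} (hM : MeasurableSet M) :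
    CompletelyRamsey {x : Set ℕ | Nat.nth (· ∈ x) ∈ M} :=
  measurable_nth hM

theorem nth_mem_range_of_strictMono {f : ℕ → ℕ} (hf : StrictMono f) :
    Nat.nth (· ∈ range f) = f := by
  have hall (n : ℕ) (hfin : (Set.ofPred (· ∈ range f)).Finite) : n < hfin.toFinset.card :=
    absurd hfin (infinite_range_of_injective hf.injective)
  funext n
  refine (Nat.eq_nth_of_strictMonoOn_of_mapsTo_of_surjOn f ?_ (fun n _ => mem_range_self n)
    (hf.strictMonoOn _) (hall n)).symm
  rintro _ ⟨m, rfl⟩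
  exact ⟨m, hall m, rfl⟩

section Shift

variable {S : {x : ℕ → ℕ // StrictMono x} → {x : ℕ → ℕ // StrictMono x}}

theorem shift_iterate_apply (hS : ∀ x n, (S x).1 n = x.1 (n + 1)) (x : {x : ℕ → ℕ // StrictMono x})
    (k n : ℕ) : (S^[k] x).1 n = x.1 (n + k) := by
  induction k generalizing x with
  | zero => rfl
  | succ k ih => rw [Function.iterate_succ_apply, ih, hS, Nat.add_assoc]

theorem exists_mem_and_shift_mem (hS : ∀ x n, (S x).1 n = x.1 (n + 1))
    {H : Set {x : ℕ → ℕ // StrictMono x}} (hH : MeasurableSet H) (hhit : Hitting S H) :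
    ∃ x ∈ H, S x ∈ H := by
  obtain ⟨M, hM, rfl⟩ := hH
  have hval (y : {x : ℕ → ℕ // StrictMono x}) :
      y ∈ Subtype.val ⁻¹' M ↔ range y.1 ∈ {x : Set ℕ | Nat.nth (· ∈ x) ∈ M} := by
    simp only [mem_preimage, mem_ofPred_eq, nth_mem_range_of_strictMono y.2]
  obtain ⟨B, -, hB, hBM⟩ := completelyRamsey_nth_preimage hM ∅ univ infinite_univ
  let e : {x : ℕ → ℕ // StrictMono x} := ⟨Nat.nth (· ∈ B), Nat.nth_strictMono hB⟩
  have he (k : ℕ) : range (S^[k] e).1 ∈ ellentuck ∅ B := by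
    refine mem_ellentuck_empty.2 ⟨?_, infinite_range_of_injective (S^[k] e).2.injective⟩
    rintro _ ⟨n, rfl⟩
    rw [shift_iterate_apply hS]
    exact Nat.nth_mem_of_infinite hB _
  rcases hBM with hacc | hrej
  · exact ⟨e, (hval e).2 (hacc (he 0)), (hval (S e)).2 (hacc (he 1))⟩
  · obtain ⟨k, -, hk⟩ := hhit e
    exact (hrej (he k) ((hval _).1 hk)).elim

end Shift

end GalvinPrikry

section Dynamics

variable {X : Type*} {f : X → X} {φ : X → ℕ} {r : ℕ}

theorem apply_iterate_of_drel (hφ : ∀ x, Drel r (φ x) (φ (f x))) (x : X) {i : ℕ}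
    (hi : i ≤ φ x) : φ (f^[i] x) = φ x - i := by
  induction i with
  | zero => rfl
  | succ i ih =>
    rw [Function.iterate_succ_apply']
    rcases hφ (f^[i] x) with ⟨-, h⟩ | ⟨h, -⟩ <;> rw [ih (by omega)] at h <;> omega

theorem hitting_of_drel (hφ : ∀ x, Drel r (φ x) (φ (f x))) : Hitting f {x | φ x = 0} :=
  fun x => ⟨φ (f x) + 1, by omega, by
    simp [Function.iterate_succ_apply, apply_iterate_of_drel hφ (f x) le_rfl]⟩

theorem fwdIndep_of_drel (hφ : ∀ x, Drel r (φ x) (φ (f x))) : FwdIndep f r {x | φ x = 0} := by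
  intro x hx k hk hkx
  have hr : r ≤ φ (f x) := by
    rcases hφ x with ⟨h, -⟩ | ⟨-, h⟩
    · exact absurd hx h.ne'
    · exact h
  obtain ⟨j, rfl⟩ : ∃ j, k = j + 1 := ⟨k - 1, by omega⟩
  have h0 : φ (f^[j] (f x)) = 0 := by simpa [Function.iterate_succ_apply] using hkx
  by_contra! hkr
  have := apply_iterate_of_drel hφ (f x) (i := j) (by omega)
  omega

end Dynamics

theorem stmt9 (r : ℕ) (hr : 1 ≤ r)
    (S : {x : ℕ → ℕ // StrictMono x} → {x : ℕ → ℕ // StrictMono x})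
    (hS : ∀ x n, (S x).1 n = x.1 (n+1)) :
    ¬ ∃ φ : {x : ℕ → ℕ // StrictMono x} → ℕ, Measurable φ ∧
      ∀ x, Drel r (φ x) (φ (S x)) := by
  rintro ⟨φ, hφ, hdrel⟩
  obtain ⟨x, hx, hSx⟩ := GalvinPrikry.exists_mem_and_shift_mem hS
    (hφ (measurableSet_singleton 0)) (hitting_of_drel hdrel)
  have := fwdIndep_of_drel hdrel x hx 1 le_rfl hSx
  omega
end

section
/- Let X be a set, f : X → X an acyclic function, t and d positive integers, and E an equivalence relation on X such that each E-class has finite ρ_f-diameter and each ball B_{2t(d+1)}(x) meets at most d+1 E-classes. Let A = {x ∈ X : (x, f^k(x)) ∉ E for all k ≥ 1}. Then A is a hitting set for f. -/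
set_option linter.unusedVariables false

/-!
If the forward orbit of `x` never enters `A`, then each `f^[n] x` with `n ≥ 1` is `E`-related to
a later point of the orbit, so the class of `f x` contains `f^[k] x` for arbitrarily large `k`.
Two points at `ρ_f`-distance at most `m` have forward orbits that merge within `m` steps in total,
so `f^[i+1] x = f^[j+k] x` with `i + j ≤ m`; for `k > m + 1` this is a cycle of `f`.
-/

section

variable {X : Type*}

theorem funGraph_walk_exists_iterate_eq (f : X → X) {a b : X} (w : (funGraph f).Walk a b) :
    ∃ i j : ℕ, i + j ≤ w.length ∧ f^[i] a = f^[j] b := by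
  induction w with
  | nil => exact ⟨0, 0, le_rfl, rfl⟩
  | @cons a b c hadj w ih =>
    obtain ⟨i, j, hij, heq⟩ := ih
    rw [SimpleGraph.Walk.length_cons]
    rcases hadj.2 with hab | hba
    · exact ⟨i + 1, j, by omega, by rw [Function.iterate_succ_apply, hab, heq]⟩
    · rcases i with _ | i
      · refine ⟨0, j + 1, by omega, ?_⟩
        rw [Function.iterate_succ_apply', ← heq]
        exact hba.symm
      · refine ⟨i, j, by omega, ?_⟩
        rwa [Function.iterate_succ_apply, hba] at heq

theorem distLE.exists_iterate_eq {f : X → X} {m : ℕ} {a b : X} (h : distLE f m a b) :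
    ∃ i j : ℕ, i + j ≤ m ∧ f^[i] a = f^[j] b := by
  obtain ⟨w, hw⟩ := h.1.exists_walk_length_eq_dist
  obtain ⟨i, j, hij, heq⟩ := funGraph_walk_exists_iterate_eq f w
  exact ⟨i, j, hij.trans (hw ▸ h.2), heq⟩

theorem Acyclic.eq_of_iterate_apply_eq {f : X → X} (hf : Acyclic f) {x : X} {i j : ℕ}
    (h : f^[i] x = f^[j] x) : i = j := by
  wlog hij : i ≤ j generalizing i j
  · exact (this h.symm (by omega)).symm
  by_contra hne
  refine hf (f^[i] x) (j - i) (by omega) ?_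
  rw [← Function.iterate_add_apply, Nat.sub_add_cancel hij, h]

theorem exists_lt_rel_of_forall_exists_lt {E : X → X → Prop}
    (hE : ∀ {a b c}, E a b → E b c → E a c) {u : ℕ → X} {n₀ : ℕ}
    (h : ∀ n ≥ n₀, ∃ m > n, E (u n) (u m)) (N : ℕ) :
    ∃ k, n₀ + N < k ∧ E (u n₀) (u k) := by
  induction N with
  | zero => simpa using h n₀ le_rfl
  | succ N ih =>
    obtain ⟨k, hk, hrel⟩ := ih
    obtain ⟨m, hm, hrel'⟩ := h k (by omega)
    exact ⟨m, by omega, hE hrel hrel'⟩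

end

theorem stmt11_general {X : Type*} (f : X → X) (hf : Acyclic f)
    (E : X → X → Prop) (hE : Equivalence E)
    (hdiam : ∀ x : X, ∃ m : ℕ, ∀ y z, E x y → E x z → distLE f m y z) :
    Hitting f {x : X | ∀ k : ℕ, 1 ≤ k → ¬ E x (f^[k] x)} := by
  intro x
  by_contra hmiss
  have hstep : ∀ n ≥ 1, ∃ k > n, E (f^[n] x) (f^[k] x) := by
    intro n hn
    by_contra hno
    refine hmiss ⟨n, hn, fun k hk hrel => hno ⟨k + n, by omega, ?_⟩⟩
    rwa [Function.iterate_add_apply]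
  obtain ⟨m, hm⟩ := hdiam (f x)
  obtain ⟨k, hk, hrel⟩ :=
    exists_lt_rel_of_forall_exists_lt (E := E) (u := (f^[·] x)) hE.trans hstep m
  obtain ⟨i, j, hij, heq⟩ := (hm _ _ (hE.refl _) hrel).exists_iterate_eq
  rw [← Function.iterate_succ_apply, ← Function.iterate_add_apply] at heq
  have := hf.eq_of_iterate_apply_eq heq
  omega

theorem stmt11 {X : Type*} (f : X → X) (hf : Acyclic f)
    (t d : ℕ) (ht : 1 ≤ t) (hd : 1 ≤ d)
    (E : X → X → Prop) (hE : Equivalence E)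
    (hdiam : ∀ x : X, ∃ m : ℕ, ∀ y z, E x y → E x z → distLE f m y z)
    (hball : ∀ x : X, ∃ s : Finset X, s.card ≤ d + 1 ∧
      ∀ y ∈ ball f (2*t*(d+1)) x, ∃ z ∈ s, E y z) :
    Hitting f {x : X | ∀ k : ℕ, 1 ≤ k → ¬ E x (f^[k] x)} :=
  stmt11_general f hf E hE hdiam
end

section
/- Let t be a positive integer, f : X → X an acyclic function, and H an r-forward-independent hitting set for f, where r = 4(6t)². With c_H and the function ℓ(x) (minimal ℓ ≥ 1 such that c_H(x) ≠ c_H(f^ℓ(x))) defined as in the two-coloring construction, one has ℓ(x) ≤ 2s + 2 for every x ∈ X, where s = 6t. -/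
set_option linter.unusedVariables false

/-! Before `x` first hits `H` at `z = f^[k x] x`, the colour of `f^[j] x` is determined by `c z`
and by the hitting time `k x - j`, which drops by one per step. If `c z = 0` or the hitting time
is at least `r/2`, the colour is the parity of `⌊(k x - j)/s⌋`, which changes every `s` steps;
otherwise it is the parity of `i + 1` for the interval `I_i` containing the hitting time, which
changes after at most `s + 1` steps; across `r/2` the two rules give the even `⌊(r/2)/s⌋ = 2s`
against the odd `2m + 1` of `I_{2m}`. Hence the colour changes within `s + 1` steps once
`k x ≥ s + 2`. Otherwise `x` reaches `z ∈ H` within `s + 1` steps, and `k z > r ≥ s + 2` by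
forward independence. -/

def IsFirstHitTime {X : Type*} (f : X → X) (H : Set X) (k : X → ℕ) : Prop :=
  ∀ x, 1 ≤ k x ∧ f^[k x] x ∈ H ∧ ∀ j, 1 ≤ j → j < k x → f^[j] x ∉ H

namespace IsFirstHitTime

variable {X : Type*} {f : X → X} {H : Set X} {k : X → ℕ}

theorem apply_iterate (hk : IsFirstHitTime f H k) {y : X} {j : ℕ} (hj : j < k y) :
    k (f^[j] y) = k y - j := by
  obtain ⟨-, hyH, hy⟩ := hk y
  obtain ⟨hj1, hjH, hj'⟩ := hk (f^[j] y)
  have hle : k (f^[j] y) ≤ k y - j := by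
    by_contra! hlt
    refine hj' (k y - j) (by omega) hlt ?_
    rwa [← Function.iterate_add_apply, Nat.sub_add_cancel hj.le]
  have hge : k y ≤ k (f^[j] y) + j := by
    by_contra! hlt
    exact hy _ (by omega) hlt (by rwa [Function.iterate_add_apply])
  omega

theorem iterate_apply_iterate (hk : IsFirstHitTime f H k) {y : X} {j : ℕ} (hj : j < k y) :
    f^[k (f^[j] y)] (f^[j] y) = f^[k y] y := by
  rw [hk.apply_iterate hj, ← Function.iterate_add_apply, Nat.sub_add_cancel hj.le]

end IsFirstHitTime

theorem FwdIndep.lt_hitTime {X : Type*} {f : X → X} {r : ℕ} {H : Set X} {k : X → ℕ}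
    (hInd : FwdIndep f r H) (hk : IsFirstHitTime f H k) {z : X} (hz : z ∈ H) : r < k z :=
  hInd z hz (k z) (hk z).1 (hk z).2.1

theorem exists_ne_of_eq_div_mod_two {g : ℕ → ℕ} {s n : ℕ} (hs : 0 < s) (hn : s ≤ n)
    (hg : ∀ d ≤ s, g d = (n - d) / s % 2) : ∃ d ≤ s, g d ≠ g 0 := by
  have hmod : n % s < s := Nat.mod_lt n hs
  obtain ⟨q, hq⟩ : ∃ q, n / s = q + 1 := ⟨n / s - 1, by have := Nat.div_pos hn hs; omega⟩
  have hsub : n - (n % s + 1) = s * q + (s - 1) := by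
    have := Nat.div_add_mod n s
    rw [hq, Nat.mul_succ] at this
    omega
  refine ⟨n % s + 1, by omega, ?_⟩
  rw [hg _ (by omega), hg 0 (Nat.zero_le _), hsub, Nat.sub_zero, hq,
    Nat.mul_add_div hs, Nat.div_eq_of_lt (by omega)]
  omega

theorem exists_le_lt_succ {α : Type*} [LinearOrder α] {a : ℕ → α} {x : α} {N : ℕ}
    (h0 : a 0 ≤ x) (hN : x < a (N + 1)) : ∃ i ≤ N, a i ≤ x ∧ x < a (i + 1) := by
  classical
  have hex : ∃ i, x < a (i + 1) := ⟨N, hN⟩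
  refine ⟨Nat.find hex, Nat.find_min' hex hN, ?_, Nat.find_spec hex⟩
  rcases Nat.eq_zero_or_eq_succ_pred (Nat.find hex) with h | h
  · rwa [h]
  · rw [h]
    exact not_lt.mp (Nat.find_min hex (by omega))

theorem le_of_apply_iterate_ne {X β : Type*} {f : X → X} {c : X → β} {x : X} {L n : ℕ}
    (hL : ∀ j, 1 ≤ j → j < L → c (f^[j] x) = c x) {d₁ d₂ : ℕ} (h₁ : d₁ ≤ n) (h₂ : d₂ ≤ n)
    (hne : c (f^[d₁] x) ≠ c (f^[d₂] x)) : L ≤ n := by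
  by_contra! hn
  have hconst : ∀ j ≤ n, c (f^[j] x) = c x := fun j hj => by
    rcases Nat.eq_zero_or_pos j with rfl | hj0
    · rfl
    · exact hL j hj0 (by omega)
  exact hne ((hconst d₁ h₁).trans (hconst d₂ h₂).symm)

/-- The colouring `c_H`, with `k` the hitting time of `H` and `I_i = [a i, a (i + 1))`. -/
structure IsTwoColoring {X : Type*} (f : X → X) (s r m : ℕ) (a : ℕ → ℕ) (k c : X → ℕ) :
    Prop where
  a_zero : a 0 = 0
  a_top : a (2 * m + 1) = r / 2
  a_succ : ∀ i ≤ 2 * m, a (i + 1) = a i + s ∨ a (i + 1) = a i + s + 1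
  color_zero_or_one : ∀ x, c x = 0 ∨ c x = 1
  color_of_le : ∀ x, r / 2 ≤ k x → c x = k x / s % 2
  color_of_hit_zero : ∀ x, k x < r / 2 → c (f^[k x] x) = 0 → c x = k x / s % 2
  color_of_hit_one : ∀ x, k x < r / 2 → c (f^[k x] x) = 1 →
    ∀ i ≤ 2 * m, a i ≤ k x → k x < a (i + 1) → c x = (i + 1) % 2

namespace IsTwoColoring

variable {X : Type*} {f : X → X} {H : Set X} {s r m : ℕ} {a : ℕ → ℕ} {k c : X → ℕ}

theorem add_le_a_succ (hC : IsTwoColoring f s r m a k c) {i : ℕ} (hi : i ≤ 2 * m) :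
    a i + s ≤ a (i + 1) := by
  rcases hC.a_succ i hi with h | h <;> omega

theorem a_succ_le_add (hC : IsTwoColoring f s r m a k c) {i : ℕ} (hi : i ≤ 2 * m) :
    a (i + 1) ≤ a i + s + 1 := by
  rcases hC.a_succ i hi with h | h <;> omega

theorem color_iterate_of_le (hC : IsTwoColoring f s r m a k c) (hk : IsFirstHitTime f H k)
    {y : X} {d : ℕ} (hd : d < k y) (hle : r / 2 ≤ k y - d) :
    c (f^[d] y) = (k y - d) / s % 2 := by
  rw [← hk.apply_iterate hd] at hle ⊢
  exact hC.color_of_le _ hle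

theorem color_iterate_of_hit_zero (hC : IsTwoColoring f s r m a k c)
    (hk : IsFirstHitTime f H k) {y : X} (hy : c (f^[k y] y) = 0) {d : ℕ} (hd : d < k y) :
    c (f^[d] y) = (k y - d) / s % 2 := by
  rcases le_or_gt (r / 2) (k y - d) with hle | hlt
  · exact hC.color_iterate_of_le hk hd hle
  · rw [← hk.apply_iterate hd] at hlt ⊢
    exact hC.color_of_hit_zero _ hlt (by rwa [hk.iterate_apply_iterate hd])

theorem color_iterate_of_hit_one (hC : IsTwoColoring f s r m a k c)
    (hk : IsFirstHitTime f H k) {y : X} (hy : c (f^[k y] y) = 1) {d : ℕ} (hd : d < k y)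
    (hlt : k y - d < r / 2) {i : ℕ} (hi : i ≤ 2 * m) (hlo : a i ≤ k y - d)
    (hhi : k y - d < a (i + 1)) : c (f^[d] y) = (i + 1) % 2 := by
  rw [← hk.apply_iterate hd] at hlt hlo hhi
  exact hC.color_of_hit_one _ hlt (by rwa [hk.iterate_apply_iterate hd]) i hi hlo hhi

theorem exists_color_ne (hC : IsTwoColoring f s r m a k c) (hk : IsFirstHitTime f H k)
    (hs : 0 < s) (hr : r = 4 * s ^ 2) {y : X} (hy : s + 2 ≤ k y) :
    ∃ d₁ ≤ s + 1, ∃ d₂ ≤ s + 1, c (f^[d₁] y) ≠ c (f^[d₂] y) := by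
  have hr2 : r / 2 = s * (2 * s) := by subst hr; ring_nf; omega
  rcases hC.color_zero_or_one (f^[k y] y) with hz | hz
  · obtain ⟨d, hd, hne⟩ := exists_ne_of_eq_div_mod_two hs (by omega)
      fun d _ => hC.color_iterate_of_hit_zero hk hz (d := d) (by omega)
    exact ⟨d, by omega, 0, by omega, hne⟩
  rcases lt_or_ge (k y) (r / 2) with hlt | hle
  · obtain ⟨i, hi, hlo, hhi⟩ := exists_le_lt_succ (N := 2 * m)
      (hC.a_zero ▸ Nat.zero_le (k y)) (hC.a_top ▸ hlt)
    obtain ⟨j, rfl⟩ : ∃ j, i = j + 1 := Nat.exists_eq_add_one.mpr <| by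
      by_contra! hi0
      obtain rfl : i = 0 := by omega
      have := hC.a_succ_le_add (i := 0) (by omega)
      have := hC.a_zero
      omega
    have hj₁ := hC.add_le_a_succ (i := j) (by omega)
    have hj₂ := hC.a_succ_le_add (i := j + 1) hi
    refine ⟨0, by omega, k y - a (j + 1) + 1, by omega, ?_⟩
    rw [hC.color_iterate_of_hit_one hk hz (by omega) (by omega) hi (by omega) (by omega),
      hC.color_iterate_of_hit_one hk hz (by omega) (by omega) (i := j) (by omega)
        (by omega) (by omega)]
    omega
  rcases lt_or_ge (k y) (r / 2 + s) with hlt | hle'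
  · have htop := hC.add_le_a_succ (i := 2 * m) le_rfl
    have := hC.a_top
    refine ⟨k y - r / 2, by omega, k y - r / 2 + 1, by omega, ?_⟩
    rw [hC.color_iterate_of_le hk (by omega) (by omega),
      hC.color_iterate_of_hit_one hk hz (by omega) (by omega) (i := 2 * m) le_rfl
        (by omega) (by omega),
      show k y - (k y - r / 2) = s * (2 * s) by omega, Nat.mul_div_cancel_left _ hs]
    omega
  · obtain ⟨d, hd, hne⟩ := exists_ne_of_eq_div_mod_two hs (by omega)
      fun d _ => hC.color_iterate_of_le hk (y := y) (d := d) (by omega) (by omega)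
    exact ⟨d, by omega, 0, by omega, hne⟩

end IsTwoColoring

theorem stmt13_general {X : Type*} (f : X → X) (t : ℕ) (ht : 1 ≤ t)
    (s r : ℕ) (hs : s = 6*t) (hrr : r = 4*s^2)
    (H : Set X) (hInd : FwdIndep f r H)
    (k : X → ℕ)
    (hk : ∀ x, 1 ≤ k x ∧ f^[k x] x ∈ H ∧ ∀ j, 1 ≤ j → j < k x → f^[j] x ∉ H)
    (m : ℕ) (a : ℕ → ℕ) (ha0 : a 0 = 0) (haTop : a (2*m+1) = r/2)
    (hsize : ∀ i ≤ 2*m, a (i+1) = a i + s ∨ a (i+1) = a i + s + 1)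
    (c : X → ℕ) (hc01 : ∀ x, c x = 0 ∨ c x = 1)
    (hcBig : ∀ x, r/2 ≤ k x → c x = (k x / s) % 2)
    (hcT0 : ∀ x, k x < r/2 → c (f^[k x] x) = 0 → c x = (k x / s) % 2)
    (hcT1 : ∀ x, k x < r/2 → c (f^[k x] x) = 1 →
      ∀ i ≤ 2*m, a i ≤ k x → k x < a (i+1) → c x = (i+1) % 2)
    (L : X → ℕ)
    (hL : ∀ x, 1 ≤ L x ∧ c (f^[L x] x) ≠ c x ∧ ∀ j, 1 ≤ j → j < L x → c (f^[j] x) = c x) :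
    ∀ x : X, L x ≤ 2*s + 2 := by
  have hC : IsTwoColoring f s r m a k c := ⟨ha0, haTop, hsize, hc01, hcBig, hcT0, hcT1⟩
  have hs0 : 0 < s := by omega
  intro x
  by_cases hx : s + 2 ≤ k x
  · obtain ⟨d₁, h₁, d₂, h₂, hne⟩ := hC.exists_color_ne hk hs0 hrr hx
    exact le_of_apply_iterate_ne (hL x).2.2 (n := 2 * s + 2) (by omega) (by omega) hne
  · have hz : s + 2 ≤ k (f^[k x] x) := by
      have := hInd.lt_hitTime hk (hk x).2.1
      nlinarith
    obtain ⟨d₁, h₁, d₂, h₂, hne⟩ := hC.exists_color_ne hk hs0 hrr hz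
    rw [← Function.iterate_add_apply, ← Function.iterate_add_apply] at hne
    exact le_of_apply_iterate_ne (hL x).2.2 (n := 2 * s + 2) (by omega) (by omega) hne

theorem stmt13 {X : Type*} (f : X → X) (hf : Acyclic f) (t : ℕ) (ht : 1 ≤ t)
    (s r : ℕ) (hs : s = 6*t) (hrr : r = 4*s^2)
    (H : Set X) (hHit : Hitting f H) (hInd : FwdIndep f r H)
    (k : X → ℕ)
    (hk : ∀ x, 1 ≤ k x ∧ f^[k x] x ∈ H ∧ ∀ j, 1 ≤ j → j < k x → f^[j] x ∉ H)
    (m : ℕ) (a : ℕ → ℕ) (ha0 : a 0 = 0) (haTop : a (2*m+1) = r/2)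
    (hsize : ∀ i ≤ 2*m, a (i+1) = a i + s ∨ a (i+1) = a i + s + 1)
    (c : X → ℕ) (hc01 : ∀ x, c x = 0 ∨ c x = 1)
    (hcBig : ∀ x, r/2 ≤ k x → c x = (k x / s) % 2)
    (hcT0 : ∀ x, k x < r/2 → c (f^[k x] x) = 0 → c x = (k x / s) % 2)
    (hcT1 : ∀ x, k x < r/2 → c (f^[k x] x) = 1 →
      ∀ i ≤ 2*m, a i ≤ k x → k x < a (i+1) → c x = (i+1) % 2)
    (L : X → ℕ)
    (hL : ∀ x, 1 ≤ L x ∧ c (f^[L x] x) ≠ c x ∧ ∀ j, 1 ≤ j → j < L x → c (f^[j] x) = c x) :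
    ∀ x : X, L x ≤ 2*s + 2 :=
  stmt13_general f t ht s r hs hrr H hInd k hk m a ha0 haTop hsize c hc01 hcBig hcT0 hcT1 L hL
end
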